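/- Point complexity dominates the lower local dimension of any Borel measure almost everywhere: if μ is a Borel probability measure on X with lower local dimension d_μ(x) = liminf_{ε→0} log μ(B(x,ε))/log ε, then for μ-almost every x, liminf_{i→∞} S^I(x, 2^{-i})/i ≥ d_μ(x); equivalently, for a.e. x and every δ > 0, S^I(x,ε) ≥ −(d_μ(x) − δ) log₂ ε for all sufficiently small ε. -/

import Mathlib

open Metric Set Filter ENNReal MeasureTheory

/-- `I : Σ → X` is a computable interpretation. -/
def IsCompInterp {X : Type*} [MetricSpace X] (I : List Bool → X) : Prop :=
  DenseRange I ∧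
    ∃ D : List Bool → List Bool → ℕ → ℚ,
      Computable (fun q : (List Bool × List Bool) × ℕ => D q.1.1 q.1.2 q.2) ∧
      ∀ (s₁ s₂ : List Bool) (n : ℕ),
        |dist (I s₁) (I s₂) - (D s₁ s₂ n : ℝ)| ≤ (2 : ℝ)⁻¹ ^ n

/-- `S^I(x,ε) = min{|p| : d(I(U(p)), x) < ε}`. -/
noncomputable def Sinfo (U : List Bool →. List Bool) {Y : Type*} [MetricSpace Y]
    (I : List Bool → Y) (x : Y) (ε : ℝ) : ℕ∞ :=
  sInf {n : ℕ∞ | ∃ p : List Bool, (p.length : ℕ∞) = n ∧ ∃ s ∈ U p, dist (I s) x < ε}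

/-- The lower local dimension of a measure `μ` at `x`:
`d_μ(x) = liminf_{ε→0⁺} log μ(B(x,ε)) / log ε`. -/
noncomputable def lowerLocalDim {X : Type*} [MetricSpace X] [MeasurableSpace X]
    (μ : Measure X) (x : X) : ℝ :=
  liminf (fun ε : ℝ => Real.log (μ (ball x ε)).toReal / Real.log ε)
    (nhdsWithin 0 (Ioi 0))


/-!
If `q < d_μ(x)` then `μ(B(x,r)) ≤ r^q` for all small `r`, so `x` lies in a "Frostman set" `E`.
There are fewer than `2^L` programs of length `< L`, and the ball of radius `ρ` around an output
meets `E` in measure at most `(2ρ)^q`. Hence the points of `E` with `S^I(x, 2^{-i}) < s i` have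
measure `≲ 2^{(s-q) i}`, which is summable for `s < q`, and Borel–Cantelli shows that a.e. point
of `E` satisfies `S^I(x, 2^{-i}) ≥ s i` eventually. Rational `s < q` and dyadic scales make the
union of exceptional sets countable.
-/

open scoped Topology

section Complexity

variable {Y : Type*} [MetricSpace Y] (U : List Bool →. List Bool) (I : List Bool → Y)

lemma Sinfo_lt_coe_iff {x : Y} {ε : ℝ} {L : ℕ} :
    Sinfo U I x ε < L ↔ ∃ p : List Bool, p.length < L ∧ ∃ y ∈ U p, dist (I y) x < ε := by
  simp only [Sinfo, sInf_lt_iff, mem_ofPred_eq]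
  constructor
  · rintro ⟨_, ⟨p, rfl, hp⟩, hlt⟩
    exact ⟨p, by exact_mod_cast hlt, hp⟩
  · rintro ⟨p, hlt, hp⟩
    exact ⟨_, ⟨p, rfl, hp⟩, by exact_mod_cast hlt⟩

lemma Sinfo_antitone (x : Y) : Antitone (Sinfo U I x) := fun _ _ hε =>
  sInf_le_sInf fun _ ⟨p, hp, y, hy, hd⟩ => ⟨p, hp, y, hy, hd.trans_le hε⟩

end Complexity

lemma ncard_setOf_length_lt_le (L : ℕ) : {p : List Bool | p.length < L}.ncard ≤ 2 ^ L := by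
  induction L with
  | zero => simp
  | succ L ih =>
    have hsplit : {p : List Bool | p.length < L + 1} = {p | p.length < L} ∪ {p | p.length = L} := by
      ext p
      simp [le_iff_lt_or_eq]
    have hcard : {p : List Bool | p.length = L}.ncard = 2 ^ L := by
      rw [← Nat.card_coe_set_eq]
      change Nat.card (List.Vector Bool L) = _
      simp
    calc {p : List Bool | p.length < L + 1}.ncard
        ≤ {p : List Bool | p.length < L}.ncard + {p : List Bool | p.length = L}.ncard :=
          hsplit ▸ ncard_union_le _ _
      _ ≤ 2 ^ (L + 1) := by rw [hcard, pow_succ]; omega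

lemma measure_biUnion_length_lt_le {α : Type*} [MeasurableSpace α] (μ : Measure α)
    (A : List Bool → Set α) {c : ℝ≥0∞} (L : ℕ) (h : ∀ p : List Bool, p.length < L → μ (A p) ≤ c) :
    μ (⋃ p ∈ {p : List Bool | p.length < L}, A p) ≤ 2 ^ L * c := by
  have hfin := List.finite_length_lt Bool L
  calc μ (⋃ p ∈ {p : List Bool | p.length < L}, A p) = μ (⋃ p ∈ hfin.toFinset, A p) := by
        simp only [Finite.mem_toFinset]
    _ ≤ ∑ p ∈ hfin.toFinset, μ (A p) := measure_biUnion_finset_le _ _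
    _ ≤ hfin.toFinset.card • c :=
        Finset.sum_le_card_nsmul _ _ _ fun p hp => h p (hfin.mem_toFinset.1 hp)
    _ ≤ 2 ^ L * c := by
        rw [nsmul_eq_mul, ← ncard_eq_toFinset_card _ hfin]
        gcongr
        exact_mod_cast ncard_setOf_length_lt_le L

lemma measure_inter_ball_le {α : Type*} [PseudoMetricSpace α] [MeasurableSpace α] (μ : Measure α)
    {E : Set α} {ρ : ℝ} {c : ℝ≥0∞} (hE : ∀ x ∈ E, μ (ball x (2 * ρ)) ≤ c) (z : α) :
    μ (E ∩ ball z ρ) ≤ c := by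
  rcases (E ∩ ball z ρ).eq_empty_or_nonempty with h | ⟨x, hxE, hxz⟩
  · simp [h]
  · refine (measure_mono fun y hy => ?_).trans (hE x hxE)
    have hyz : dist y z < ρ := hy.2
    rw [mem_ball] at hxz ⊢
    linarith [dist_triangle_right y x z]

lemma le_ofReal_rpow_of_lt_log_div_log {m : ℝ≥0∞} {e q : ℝ} (hq : 0 ≤ q) (he : 0 < e)
    (he1 : e < 1) (h : q < Real.log m.toReal / Real.log e) : m ≤ ENNReal.ofReal (e ^ q) := by
  have hlog : Real.log e < 0 := Real.log_neg he he1
  have hlt : Real.log m.toReal < Real.log (e ^ q) := by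
    rw [Real.log_rpow he]
    exact (lt_div_iff_of_neg hlog).1 h
  -- `m = 0` and `m = ∞` both give `Real.log m.toReal = 0`, which `h` rules out as `q ≥ 0`.
  have hm : 0 < m.toReal := by
    by_contra! hm
    rw [le_antisymm hm ENNReal.toReal_nonneg, Real.log_zero, Real.log_rpow he] at hlt
    nlinarith
  rw [le_ofReal_iff_toReal_le (ENNReal.toReal_pos_iff.1 hm).2.ne (by positivity)]
  exact ((Real.log_lt_log_iff hm (by positivity)).1 hlt).le

lemma two_pow_ceil_mul_le {s q : ℝ} (hs : 0 ≤ s) (j : ℕ) :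
    (2 : ℝ) ^ ⌈s * j⌉₊ * (2 * 2⁻¹ ^ j) ^ q ≤ 2 ^ (1 + q) * (2 ^ (s - q)) ^ j := by
  have h2j : (2 : ℝ) * 2⁻¹ ^ j = 2 ^ (1 - (j : ℝ)) := by
    rw [Real.rpow_sub two_pos, Real.rpow_one, Real.rpow_natCast, inv_pow, div_eq_mul_inv]
  rw [h2j, ← Real.rpow_mul zero_le_two, ← Real.rpow_natCast 2, ← Real.rpow_add two_pos,
    ← Real.rpow_natCast (2 ^ (s - q)), ← Real.rpow_mul zero_le_two, ← Real.rpow_add two_pos]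
  apply Real.rpow_le_rpow_of_exponent_le one_le_two
  have := Nat.ceil_lt_add_one (mul_nonneg hs j.cast_nonneg)
  nlinarith

section Frostman

variable {X : Type*} [MetricSpace X] [MeasurableSpace X]

def frostmanSet (μ : Measure X) (q r₀ : ℝ) : Set X :=
  {x | ∀ r ∈ Ioo 0 r₀, μ (ball x r) ≤ ENNReal.ofReal (r ^ q)}

lemma exists_mem_frostmanSet (μ : Measure X) {x : X} {q : ℝ} (hq : 0 ≤ q)
    (h : q < lowerLocalDim μ x) : ∃ t : ℕ, x ∈ frostmanSet μ q (2⁻¹ ^ t) := by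
  have hev : ∀ᶠ e in 𝓝[>] (0 : ℝ), q < Real.log (μ (ball x e)).toReal / Real.log e := by
    rw [lowerLocalDim, liminf_eq] at h
    have hne : {a : ℝ | ∀ᶠ e in 𝓝[>] 0,
        a ≤ Real.log (μ (ball x e)).toReal / Real.log e}.Nonempty := by
      by_contra hemp
      rw [not_nonempty_iff_eq_empty.1 hemp, Real.sSup_empty] at h
      linarith
    obtain ⟨a, ha, hqa⟩ := exists_lt_of_lt_csSup hne h
    exact Eventually.mono ha fun e he => hqa.trans_le he
  obtain ⟨u, hu, hsub⟩ := mem_nhdsGT_iff_exists_Ioo_subset.1 hev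
  obtain ⟨t, ht⟩ := exists_pow_lt_of_lt_one (lt_min hu one_pos) (by norm_num : (2 : ℝ)⁻¹ < 1)
  refine ⟨t, fun e ⟨he, het⟩ => ?_⟩
  have heu : e < min u 1 := het.trans ht
  exact le_ofReal_rpow_of_lt_log_div_log hq he (heu.trans_le (min_le_right _ _))
    (hsub ⟨he, heu.trans_le (min_le_left _ _)⟩)

lemma measure_frostmanSet_inter_Sinfo_lt_le (μ : Measure X) (U : List Bool →. List Bool)
    (I : List Bool → X) {q r₀ ρ : ℝ} (hρ : 0 < ρ) (hρr₀ : 2 * ρ < r₀) (L : ℕ) :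
    μ (frostmanSet μ q r₀ ∩ {x | Sinfo U I x ρ < L}) ≤
      2 ^ L * ENNReal.ofReal ((2 * ρ) ^ q) := by
  set E := frostmanSet μ q r₀
  have hcover : E ∩ {x | Sinfo U I x ρ < L} ⊆
      ⋃ p ∈ {p : List Bool | p.length < L}, E ∩ {x | ∃ y ∈ U p, dist (I y) x < ρ} := by
    rintro x ⟨hxE, hx⟩
    obtain ⟨p, hp, hy⟩ := (Sinfo_lt_coe_iff U I).1 hx
    exact mem_biUnion hp ⟨hxE, hy⟩
  refine (measure_mono hcover).trans (measure_biUnion_length_lt_le μ _ L fun p _ => ?_)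
  by_cases hdom : ∃ y, y ∈ U p
  · obtain ⟨y, hy⟩ := hdom
    have hball : {x | ∃ y' ∈ U p, dist (I y') x < ρ} ⊆ ball (I y) ρ := by
      rintro x ⟨y', hy', hx⟩
      rw [Part.mem_unique hy' hy] at hx
      rwa [mem_ball, dist_comm]
    exact (measure_mono (inter_subset_inter_right E hball)).trans
      (measure_inter_ball_le μ (fun x (hx : x ∈ E) => hx _ ⟨by positivity, hρr₀⟩) _)
  · simp only [not_exists] at hdom
    simp [hdom]

lemma ae_mem_frostmanSet_imp_eventually_le_Sinfo (μ : Measure X) (U : List Bool →. List Bool)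
    (I : List Bool → X) {s q r₀ : ℝ} (hs : 0 ≤ s) (hsq : s < q) (hr₀ : 0 < r₀) :
    ∀ᵐ x ∂μ, x ∈ frostmanSet μ q r₀ →
      ∀ᶠ i : ℕ in atTop, ENNReal.ofReal (s * i) ≤ Sinfo U I x (2⁻¹ ^ i) := by
  obtain ⟨K, hK⟩ : ∃ K : ℕ, ∀ j ≥ K, 2 * (2 : ℝ)⁻¹ ^ j < r₀ := by
    have : Tendsto (fun j : ℕ => 2 * (2 : ℝ)⁻¹ ^ j) atTop (𝓝 0) := by
      simpa using (tendsto_pow_atTop_nhds_zero_of_lt_one (by norm_num : (0 : ℝ) ≤ 2⁻¹)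
        (by norm_num)).const_mul 2
    exact eventually_atTop.1 (this.eventually (gt_mem_nhds hr₀))
  -- Shifting by `K` keeps every scale in the range `2 · 2⁻¹ ^ j < r₀` of the covering bound.
  set A : ℕ → Set X := fun n =>
    frostmanSet μ q r₀ ∩ {x | Sinfo U I x (2⁻¹ ^ (n + K)) < ⌈s * (n + K : ℕ)⌉₊}
  have hA : ∀ n, μ (A n) ≤ ENNReal.ofReal (2 ^ (1 + q) * (2 ^ (s - q)) ^ (n + K)) := by
    intro n
    refine (measure_frostmanSet_inter_Sinfo_lt_le μ U I (by positivity)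
      (hK _ le_add_self) _).trans ?_
    rw [← ofReal_ofNat 2, ← ofReal_pow zero_le_two, ← ofReal_mul (by positivity)]
    exact ofReal_le_ofReal (two_pow_ceil_mul_le hs _)
  have hsum : ∑' n, μ (A n) ≠ ∞ := by
    have hr : (2 : ℝ) ^ (s - q) < 1 := Real.rpow_lt_one_of_one_lt_of_neg one_lt_two (by linarith)
    have hsummable : Summable fun n : ℕ => (2 : ℝ) ^ (1 + q) * (2 ^ (s - q)) ^ (n + K) :=
      ((summable_geometric_of_lt_one (by positivity) hr).comp_injective
        (add_left_injective K)).mul_left _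
    refine ne_top_of_le_ne_top ofReal_ne_top ((ENNReal.tsum_le_tsum hA).trans_eq
      (ofReal_tsum_of_nonneg (fun n => by positivity) hsummable).symm)
  filter_upwards [ae_eventually_notMem hsum] with x hx hxE
  rw [← map_add_atTop_eq_nat K, eventually_map]
  filter_upwards [hx] with n hn
  have hceil : (⌈s * (n + K : ℕ)⌉₊ : ℕ∞) ≤ Sinfo U I x (2⁻¹ ^ (n + K)) :=
    not_lt.1 fun h => hn ⟨hxE, h⟩
  calc ENNReal.ofReal (s * (n + K : ℕ)) ≤ (⌈s * (n + K : ℕ)⌉₊ : ℝ≥0∞) := by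
        rw [← ofReal_natCast]
        exact ofReal_le_ofReal (Nat.le_ceil _)
    _ ≤ _ := by exact_mod_cast hceil

lemma ae_forall_lt_lowerLocalDim_eventually_le_Sinfo (μ : Measure X)
    (U : List Bool →. List Bool) (I : List Bool → X) :
    ∀ᵐ x ∂μ, ∀ s < lowerLocalDim μ x,
      ∀ᶠ i : ℕ in atTop, ENNReal.ofReal (s * i) ≤ Sinfo U I x (2⁻¹ ^ i) := by
  have hall : ∀ᵐ x ∂μ, ∀ (s q : ℚ) (t : ℕ), 0 ≤ (s : ℝ) → (s : ℝ) < q →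
      x ∈ frostmanSet μ q (2⁻¹ ^ t) →
        ∀ᶠ i : ℕ in atTop, ENNReal.ofReal (s * i) ≤ Sinfo U I x (2⁻¹ ^ i) :=
    ae_all_iff.2 fun s => ae_all_iff.2 fun q => ae_all_iff.2 fun t =>
      eventually_imp_distrib_left.2 fun hs => eventually_imp_distrib_left.2 fun hsq =>
        ae_mem_frostmanSet_imp_eventually_le_Sinfo μ U I hs hsq (by positivity)
  filter_upwards [hall] with x hx s hs
  rcases le_or_gt s 0 with hs0 | hs0
  · refine Eventually.of_forall fun i => ?_
    rw [ofReal_of_nonpos (mul_nonpos_of_nonpos_of_nonneg hs0 i.cast_nonneg)]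
    exact zero_le
  obtain ⟨s', hss', hs'd⟩ := exists_rat_btwn hs
  obtain ⟨q, hs'q, hqd⟩ := exists_rat_btwn hs'd
  obtain ⟨t, ht⟩ := exists_mem_frostmanSet μ (by linarith) hqd
  exact (hx s' q t (by linarith) hs'q ht).mono fun i hi =>
    (ofReal_le_ofReal (mul_le_mul_of_nonneg_right hss'.le i.cast_nonneg)).trans hi

end Frostman

lemma ofReal_le_liminf_div_of_eventually {d : ℝ} {f : ℕ → ℝ≥0∞}
    (h : ∀ s < d, ∀ᶠ i : ℕ in atTop, ENNReal.ofReal (s * i) ≤ f i) :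
    ENNReal.ofReal d ≤ liminf (fun i : ℕ => f i / i) atTop := by
  refine le_of_forall_lt_imp_le_of_dense fun b hb => le_liminf_of_le (by isBoundedDefault) ?_
  have hbtop : b ≠ ∞ := ne_top_of_lt hb
  filter_upwards [h _ ((lt_ofReal_iff_toReal_lt hbtop).1 hb), eventually_ge_atTop 1] with i hi hi1
  rw [ENNReal.le_div_iff_mul_le (Or.inl (by exact_mod_cast (one_pos.trans_le hi1).ne'))
    (Or.inl (natCast_ne_top i))]
  rwa [ofReal_mul toReal_nonneg, ofReal_toReal hbtop, ofReal_natCast] at hi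

lemma exists_ofReal_neg_mul_logb_le {d : ℝ} {g : ℝ → ℝ≥0∞} (hg : Antitone g)
    (h : ∀ s < d, ∀ᶠ i : ℕ in atTop, ENNReal.ofReal (s * i) ≤ g (2⁻¹ ^ i)) {δ : ℝ}
    (hδ : 0 < δ) : ∃ εbar > (0 : ℝ), ∀ ε : ℝ, 0 < ε → ε < εbar →
      ENNReal.ofReal (-(d - δ) * Real.logb 2 ε) ≤ g ε := by
  obtain ⟨N₁, hN₁⟩ := eventually_atTop.1 (h (d - δ / 2) (by linarith))
  obtain ⟨N₂, hN₂⟩ := exists_nat_gt (2 * (d - δ) / δ)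
  refine ⟨2⁻¹ ^ max N₁ N₂, by positivity, fun ε hε hεN => ?_⟩
  have hε1 : ε < 1 := hεN.trans_le (pow_le_one₀ (by norm_num) (by norm_num))
  obtain ⟨n, hn, hn'⟩ := exists_nat_pow_near (one_le_inv₀ hε |>.2 hε1.le) one_lt_two
  have hNn : max N₁ N₂ ≤ n := by
    have : (2 : ℝ) ^ max N₁ N₂ < 2 ^ (n + 1) := by
      calc (2 : ℝ) ^ max N₁ N₂ = ((2 : ℝ)⁻¹ ^ max N₁ N₂)⁻¹ := by rw [inv_pow, inv_inv]
        _ < ε⁻¹ := inv_strictAnti₀ hε hεN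
        _ < _ := hn'
    have := (pow_lt_pow_iff_right₀ (one_lt_two : (1 : ℝ) < 2)).1 this
    omega
  have hεn : ε ≤ 2⁻¹ ^ n := by
    rw [inv_pow]
    exact le_inv_of_le_inv₀ (by positivity) hn
  have hlog : -Real.logb 2 ε < n + 1 := by
    rw [← Real.logb_inv, Real.logb_lt_iff_lt_rpow one_lt_two (inv_pos.2 hε)]
    exact_mod_cast hn'
  calc ENNReal.ofReal (-(d - δ) * Real.logb 2 ε) ≤ ENNReal.ofReal ((d - δ / 2) * n) := by
        rw [ofReal_le_ofReal_iff']
        rcases le_or_gt (d - δ) 0 with hd | hd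
        · have : 0 < -Real.logb 2 ε := neg_pos.2 (Real.logb_neg one_lt_two hε hε1)
          right
          nlinarith
        · have hN₂n : (N₂ : ℝ) ≤ n := by exact_mod_cast le_of_max_le_right hNn
          rw [div_lt_iff₀ hδ] at hN₂
          left
          nlinarith [mul_lt_mul_of_pos_left hlog hd]
    _ ≤ g (2⁻¹ ^ n) := hN₁ n (le_of_max_le_left hNn)
    _ ≤ g ε := hg hεn

theorem stmt19_general {X : Type*} [MetricSpace X] [MeasurableSpace X]
    (I : List Bool → X) (U : List Bool →. List Bool) (μ : Measure X) :
    ∀ᵐ x ∂μ,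
      ENNReal.ofReal (lowerLocalDim μ x) ≤
        liminf (fun i : ℕ => (Sinfo U I x ((2 : ℝ)⁻¹ ^ i) : ℝ≥0∞) / (i : ℝ≥0∞)) atTop ∧
      ∀ δ > (0 : ℝ), ∃ εbar > (0 : ℝ), ∀ ε : ℝ, 0 < ε → ε < εbar →
        ENNReal.ofReal (-(lowerLocalDim μ x - δ) * Real.logb 2 ε) ≤
          (Sinfo U I x ε : ℝ≥0∞) := by
  filter_upwards [ae_forall_lt_lowerLocalDim_eventually_le_Sinfo μ U I] with x hx
  have hanti : Antitone fun ε => (Sinfo U I x ε : ℝ≥0∞) := fun _ _ hε =>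
    ENat.toENNReal_le.2 (Sinfo_antitone U I x hε)
  exact ⟨ofReal_le_liminf_div_of_eventually hx, fun δ hδ =>
    exists_ofReal_neg_mul_logb_le hanti hx hδ⟩

/-- Point complexity dominates the lower local dimension of any Borel probability
measure almost everywhere. -/
theorem stmt19 {X : Type*} [MetricSpace X] [MeasurableSpace X] [BorelSpace X]
    (I : List Bool → X) (hI : IsCompInterp I)
    (U : List Bool →. List Bool) (hU : Partrec U)
    (μ : Measure X) [IsProbabilityMeasure μ] :
    ∀ᵐ x ∂μ,
      ENNReal.ofReal (lowerLocalDim μ x) ≤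
        liminf (fun i : ℕ => (Sinfo U I x ((2 : ℝ)⁻¹ ^ i) : ℝ≥0∞) / (i : ℝ≥0∞)) atTop ∧
      ∀ δ > (0 : ℝ), ∃ εbar > (0 : ℝ), ∀ ε : ℝ, 0 < ε → ε < εbar →
        ENNReal.ofReal (-(lowerLocalDim μ x - δ) * Real.logb 2 ε) ≤
          (Sinfo U I x ε : ℝ≥0∞) :=
  stmt19_general I U μ
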